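/- arXiv:2605.02574 — 3 statements merged into one kernel-verified Lean document; each statement's English description precedes it below -/
import Mathlib

section
/- With the setup above and cᵀΣ⁻¹c ≠ 0, the conditional variance of f₀ given s equals the conditional variance given all of y: K₀ - (cᵀλ)(λᵀΣλ)⁻¹(λᵀc) = K₀ - cᵀΣ⁻¹c, where λ = Σ⁻¹c. -/
open Matrix

noncomputable def op2 {m n : ℕ} (A : Matrix (Fin m) (Fin n) ℝ) : ℝ :=
  ‖LinearMap.toContinuousLinearMap (Matrix.toEuclideanLin A)‖

noncomputable def enorm2 {n : ℕ} (v : Fin n → ℝ) : ℝ :=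
  Real.sqrt (∑ i, v i ^ 2)

/-- The (r+1)-st singular value, via the Eckart–Young characterization:
the distance (in operator 2-norm) to the set of matrices of rank at most r. -/
noncomputable def sval {n m : ℕ} (A : Matrix (Fin n) (Fin m) ℝ) (r : ℕ) : ℝ :=
  sInf {t | ∃ B : Matrix (Fin n) (Fin m) ℝ, B.rank ≤ r ∧ t = op2 (A - B)}

/-- Kriging sufficiency (conditional variance). -/
theorem stmt1 {n : ℕ} (S : Matrix (Fin n) (Fin n) ℝ) (hS : S.PosDef)
    (c : Fin n → ℝ) (K₀ : ℝ)
    (hc : c ⬝ᵥ (S⁻¹ *ᵥ c) ≠ 0) :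
    K₀ - (c ⬝ᵥ (S⁻¹ *ᵥ c)) * ((S⁻¹ *ᵥ c) ⬝ᵥ (S *ᵥ (S⁻¹ *ᵥ c)))⁻¹ * ((S⁻¹ *ᵥ c) ⬝ᵥ c)
      = K₀ - c ⬝ᵥ (S⁻¹ *ᵥ c) := by
  have hinv : IsUnit S.det := isUnit_iff_ne_zero.mpr (ne_of_gt hS.det_pos)
  have h1 : S *ᵥ (S⁻¹ *ᵥ c) = c := by
    rw [mulVec_mulVec, mul_nonsing_inv _ hinv, one_mulVec]
  have h2 : (S⁻¹ *ᵥ c) ⬝ᵥ c = c ⬝ᵥ (S⁻¹ *ᵥ c) := dotProduct_comm _ _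
  rw [h1, h2]
  field_simp
end

section
/- Let C ∈ ℝ^{n×m}, Σ ∈ ℝ^{n×n} symmetric positive definite, Q ∈ ℝ^{n×r} full column rank. Define Λ = Σ⁻¹C, P = Q(QᵀΣQ)⁻¹QᵀΣ, and R = (I - P)Λ. Then CᵀΣ⁻¹C - CᵀQ(QᵀΣQ)⁻¹QᵀC = RᵀΣR, which is positive semidefinite. -/
open Matrix

/-!
`P = Q (QᵀSQ)⁻¹ QᵀS` is idempotent and self-adjoint for the form `xᵀ S y`, so
`(1 - P)ᵀ S (1 - P) = S - S P`; conjugating by `S⁻¹ C` gives the identity, and `Rᵀ S R` is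
positive semidefinite as a congruence of `S`.
-/

namespace Matrix

theorem mulVec_injective_of_rank_eq_card {K m n : Type*} [Field K] [Fintype m] [Fintype n]
    {Q : Matrix m n K} (hQ : Q.rank = Fintype.card n) : Function.Injective Q.mulVec :=
  mulVec_injective_iff.2 <| linearIndependent_iff_card_eq_finrank_span.2 <| by
    rw [← hQ, rank_eq_finrank_span_cols]; rfl

variable {α n p : Type*} [CommRing α] [Fintype n] [Fintype p] [DecidableEq p]

noncomputable def weightedProjection (S : Matrix n n α) (Q : Matrix n p α) : Matrix n n α :=
  Q * (Qᵀ * S * Q)⁻¹ * Qᵀ * S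

variable {S : Matrix n n α} {Q : Matrix n p α}

theorem isIdempotentElem_weightedProjection (hM : IsUnit (Qᵀ * S * Q).det) :
    IsIdempotentElem (weightedProjection S Q) :=
  calc weightedProjection S Q * weightedProjection S Q
      = Q * ((Qᵀ * S * Q)⁻¹ * (Qᵀ * S * Q)) * (Qᵀ * S * Q)⁻¹ * Qᵀ * S := by
        simp only [weightedProjection, Matrix.mul_assoc]
    _ = weightedProjection S Q := by rw [nonsing_inv_mul _ hM, Matrix.mul_one]; rfl

theorem transpose_weightedProjection_mul (hS : Sᵀ = S) :
    (weightedProjection S Q)ᵀ * S = S * weightedProjection S Q := by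
  simp only [weightedProjection, transpose_mul, transpose_transpose, transpose_nonsing_inv, hS,
    Matrix.mul_assoc]

theorem transpose_one_sub_weightedProjection_mul_mul [DecidableEq n] (hS : Sᵀ = S)
    (hM : IsUnit (Qᵀ * S * Q).det) :
    (1 - weightedProjection S Q)ᵀ * S * (1 - weightedProjection S Q)
      = S - S * weightedProjection S Q := by
  rw [transpose_sub, transpose_one, Matrix.sub_mul, transpose_weightedProjection_mul hS,
    Matrix.one_mul, Matrix.mul_sub, Matrix.mul_one, Matrix.sub_mul, Matrix.mul_assoc,
    (isIdempotentElem_weightedProjection hM).eq]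
  abel

theorem transpose_mul_inv_mul_sub_eq_residual [DecidableEq n] {m : Type*} [Fintype m]
    (hS : Sᵀ = S) (hSdet : IsUnit S.det) (hM : IsUnit (Qᵀ * S * Q).det) (C : Matrix n m α) :
    Cᵀ * S⁻¹ * C - Cᵀ * Q * (Qᵀ * S * Q)⁻¹ * Qᵀ * C
      = ((1 - weightedProjection S Q) * (S⁻¹ * C))ᵀ * S *
          ((1 - weightedProjection S Q) * (S⁻¹ * C)) := by
  have hSinv : S⁻¹ᵀ = S⁻¹ := by rw [transpose_nonsing_inv, hS]
  calc _ = (S⁻¹ * C)ᵀ * (S - S * weightedProjection S Q) * (S⁻¹ * C) := by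
        simp only [weightedProjection, transpose_mul, hSinv, Matrix.mul_sub, Matrix.sub_mul,
          Matrix.mul_assoc, nonsing_inv_mul_cancel_left _ _ hSdet,
          mul_nonsing_inv_cancel_left _ _ hSdet]
    _ = _ := by
        rw [← transpose_one_sub_weightedProjection_mul_mul hS hM]
        simp only [transpose_mul, Matrix.mul_assoc]

end Matrix

/-- Variance-reduction residual identity: CᵀΣ⁻¹C − CᵀQ(QᵀΣQ)⁻¹QᵀC = RᵀΣR ⪰ 0. -/
theorem stmt7 {n m r : ℕ} (S : Matrix (Fin n) (Fin n) ℝ) (hS : S.PosDef)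
    (C : Matrix (Fin n) (Fin m) ℝ)
    (Q : Matrix (Fin n) (Fin r) ℝ) (hQ : Q.rank = r) :
    Cᵀ * S⁻¹ * C - Cᵀ * Q * (Qᵀ * S * Q)⁻¹ * Qᵀ * C
        = ((1 - Q * (Qᵀ * S * Q)⁻¹ * Qᵀ * S) * (S⁻¹ * C))ᵀ * S *
            ((1 - Q * (Qᵀ * S * Q)⁻¹ * Qᵀ * S) * (S⁻¹ * C))
      ∧ (Cᵀ * S⁻¹ * C - Cᵀ * Q * (Qᵀ * S * Q)⁻¹ * Qᵀ * C).PosSemidef := by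
  have hSymm : Sᵀ = S := isHermitian_iff_isSymm.1 hS.isHermitian
  have hM : (Qᵀ * S * Q).PosDef := by
    simpa only [conjTranspose_eq_transpose_of_trivial] using
      hS.conjTranspose_mul_mul_same (mulVec_injective_of_rank_eq_card (by simpa using hQ))
  have key := transpose_mul_inv_mul_sub_eq_residual hSymm hS.det_pos.ne'.isUnit
    hM.det_pos.ne'.isUnit C
  refine ⟨key, key ▸ ?_⟩
  simpa only [conjTranspose_eq_transpose_of_trivial] using
    hS.posSemidef.conjTranspose_mul_mul_same _
end

section
/- Let S, T ∈ ℝ^{m×m} be symmetric positive definite with D = T - S positive semidefinite, and let μ, ν ∈ ℝ^m. Define KL = (1/2)[tr(T⁻¹S) - m + (ν-μ)ᵀT⁻¹(ν-μ) + log(det T / det S)]. Then KL ≤ (1/2)(‖S⁻¹‖₂‖ν-μ‖₂² + ‖S⁻¹‖₂ tr(D)). -/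
/-!
Write `D = T - S ⪰ 0`. In the Loewner order `T⁻¹ ⪯ S⁻¹ ⪯ ‖S⁻¹‖₂ • 1`: the first inequality bounds
`tr (T⁻¹ S)` by `tr (S⁻¹ S) = m`, and together they bound the quadratic term by
`‖S⁻¹‖₂ ‖ν - μ‖₂²`. For the log-determinant, `M = S^{-1/2} T S^{-1/2}` is positive definite with
`det M = det T / det S`, and `log λ ≤ λ - 1` on its eigenvalues gives
`log det M ≤ tr M - m = tr (S⁻¹ D) ≤ ‖S⁻¹‖₂ tr D`.
-/

open Matrix

open scoped MatrixOrder Matrix.Norms.L2Operator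

namespace Matrix

variable {n : Type*} [Fintype n] [DecidableEq n]

omit [DecidableEq n] in
lemma IsHermitian.mulVec_dotProduct {A : Matrix n n ℝ} (hA : A.IsHermitian) (u v : n → ℝ) :
    A *ᵥ u ⬝ᵥ v = u ⬝ᵥ A *ᵥ v := by
  rw [dotProduct_mulVec, ← mulVec_transpose, ← conjTranspose_eq_transpose_of_trivial, hA.eq]

lemma PosDef.mulVec_inv_mulVec {A : Matrix n n ℝ} (hA : A.PosDef) (x : n → ℝ) :
    A *ᵥ A⁻¹ *ᵥ x = x := by
  rw [mulVec_mulVec, mul_nonsing_inv _ ((isUnit_iff_isUnit_det A).mp hA.isUnit), one_mulVec]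

omit [DecidableEq n] in
lemma dotProduct_mulVec_le_of_le {A B : Matrix n n ℝ} (hAB : A ≤ B) (x : n → ℝ) :
    x ⬝ᵥ A *ᵥ x ≤ x ⬝ᵥ B *ᵥ x := by
  have := (le_iff.mp hAB).dotProduct_mulVec_nonneg x
  rw [star_trivial, sub_mulVec, dotProduct_sub] at this
  linarith

lemma PosDef.inv_le_inv_of_le {S T : Matrix n n ℝ} (hS : S.PosDef) (hT : T.PosDef) (hST : S ≤ T) :
    T⁻¹ ≤ S⁻¹ := by
  rw [le_iff]
  refine PosSemidef.of_dotProduct_mulVec_nonneg (hS.inv.isHermitian.sub hT.inv.isHermitian)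
    fun x => ?_
  -- `x ⬝ T⁻¹ x = max_y (2 x ⬝ y - y ⬝ T y)`, attained at `y = T⁻¹ x`, is antitone in `T`.
  set y := T⁻¹ *ᵥ x
  have hgap : 0 ≤ x ⬝ᵥ S⁻¹ *ᵥ x - 2 * (x ⬝ᵥ y) + y ⬝ᵥ S *ᵥ y := by
    have := hS.posSemidef.dotProduct_mulVec_nonneg (S⁻¹ *ᵥ x - y)
    rw [star_trivial, mulVec_sub, hS.mulVec_inv_mulVec, sub_dotProduct, dotProduct_sub,
      dotProduct_sub, ← hS.isHermitian.mulVec_dotProduct, hS.mulVec_inv_mulVec,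
      dotProduct_comm _ x, dotProduct_comm y x] at this
    linarith
  have hSy : y ⬝ᵥ S *ᵥ y ≤ x ⬝ᵥ y := by
    have hx : T *ᵥ y = x := hT.mulVec_inv_mulVec x
    rw [dotProduct_comm x, ← hx]
    exact dotProduct_mulVec_le_of_le hST y
  rw [star_trivial, sub_mulVec, dotProduct_sub]
  linarith

lemma dotProduct_mulVec_le_l2_opNorm_mul (A : Matrix n n ℝ) (x : n → ℝ) :
    x ⬝ᵥ A *ᵥ x ≤ ‖A‖ * (x ⬝ᵥ x) := by
  have hx : x ⬝ᵥ x = ‖WithLp.toLp 2 x‖ ^ 2 := by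
    rw [EuclideanSpace.norm_sq_eq]
    simp [dotProduct, sq]
  calc x ⬝ᵥ A *ᵥ x = inner ℝ (WithLp.toLp 2 x) (WithLp.toLp 2 (A *ᵥ x)) := by
        simp [dotProduct, PiLp.inner_apply, mul_comm]
    _ ≤ ‖WithLp.toLp 2 x‖ * ‖WithLp.toLp 2 (A *ᵥ x)‖ := real_inner_le_norm _ _
    _ ≤ ‖WithLp.toLp 2 x‖ * (‖A‖ * ‖WithLp.toLp 2 x‖) := by
        gcongr
        exact l2_opNorm_mulVec A _
    _ = ‖A‖ * (x ⬝ᵥ x) := by rw [hx]; ring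

lemma IsHermitian.le_l2_opNorm_smul_one {A : Matrix n n ℝ} (hA : A.IsHermitian) :
    A ≤ ‖A‖ • (1 : Matrix n n ℝ) := by
  rw [le_iff]
  refine PosSemidef.of_dotProduct_mulVec_nonneg
    ((isHermitian_one.smul (IsSelfAdjoint.all _)).sub hA) fun x => ?_
  have := dotProduct_mulVec_le_l2_opNorm_mul A x
  rw [star_trivial, sub_mulVec, smul_mulVec, one_mulVec, dotProduct_sub, dotProduct_smul,
    smul_eq_mul]
  linarith

lemma PosSemidef.trace_mul_nonneg {A B : Matrix n n ℝ} (hA : A.PosSemidef) (hB : B.PosSemidef) :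
    0 ≤ (A * B).trace := by
  set R := CFC.sqrt B
  have hRR : R * R = B := CFC.sqrt_mul_sqrt_self B hB.nonneg
  have hR : Rᴴ = R := (CFC.sqrt_nonneg B).posSemidef.isHermitian.eq
  have := (hA.conjTranspose_mul_mul_same R).trace_nonneg
  rwa [hR, trace_mul_comm, ← mul_assoc, hRR, trace_mul_comm] at this

lemma trace_mul_le_trace_mul_of_le {A B D : Matrix n n ℝ} (hAB : A ≤ B) (hD : D.PosSemidef) :
    (A * D).trace ≤ (B * D).trace := by
  have := (le_iff.mp hAB).trace_mul_nonneg hD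
  rw [sub_mul, trace_sub] at this
  linarith

lemma PosDef.log_det_le_trace_sub_card {M : Matrix n n ℝ} (hM : M.PosDef) :
    Real.log M.det ≤ M.trace - Fintype.card n := by
  have hpos := hM.eigenvalues_pos
  rw [hM.isHermitian.det_eq_prod_eigenvalues, hM.isHermitian.trace_eq_sum_eigenvalues]
  simp only [RCLike.ofReal_real_eq_id, id]
  rw [Real.log_prod fun i _ => (hpos i).ne']
  have := Finset.sum_le_sum fun i (_ : i ∈ Finset.univ) => Real.log_le_sub_one_of_pos (hpos i)
  simpa [Finset.sum_sub_distrib] using this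

lemma PosDef.log_det_div_det_le {S T : Matrix n n ℝ} (hS : S.PosDef) (hT : T.PosDef) :
    Real.log (T.det / S.det) ≤ (S⁻¹ * (T - S)).trace := by
  set R := CFC.sqrt S⁻¹
  have hRR : R * R = S⁻¹ := CFC.sqrt_mul_sqrt_self _ hS.inv.posSemidef.nonneg
  have hR : Rᴴ = R := (CFC.sqrt_nonneg _).posSemidef.isHermitian.eq
  have hRunit : IsUnit R := isUnit_of_mul_isUnit_left (hRR ▸ hS.inv.isUnit)
  have hM : (Rᴴ * T * R).PosDef :=
    hT.conjTranspose_mul_mul_same (mulVec_injective_iff_isUnit.mpr hRunit)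
  have hdet : (Rᴴ * T * R).det = T.det / S.det := by
    rw [hR, det_mul, det_mul, mul_comm, ← mul_assoc, ← det_mul, hRR, det_nonsing_inv,
      Ring.inverse_eq_inv', div_eq_inv_mul]
  have htr : (Rᴴ * T * R).trace = (S⁻¹ * (T - S)).trace + Fintype.card n := by
    rw [hR, trace_mul_comm, ← mul_assoc, hRR, mul_sub,
      nonsing_inv_mul _ ((isUnit_iff_isUnit_det S).mp hS.isUnit), trace_sub, trace_one]
    ring
  have := hM.log_det_le_trace_sub_card
  rwa [hdet, htr, add_sub_cancel_right] at this

end Matrix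

lemma op2_eq_l2_opNorm {m n : ℕ} (A : Matrix (Fin m) (Fin n) ℝ) : op2 A = ‖A‖ := rfl

lemma enorm2_sq {m : ℕ} (v : Fin m → ℝ) : enorm2 v ^ 2 = v ⬝ᵥ v := by
  rw [enorm2, Real.sq_sqrt (by positivity)]
  simp [dotProduct, sq]

/-- KL divergence bound between N(μ,S) and N(ν,T) when T ⪰ S. -/
theorem stmt10 {m : ℕ} (S T : Matrix (Fin m) (Fin m) ℝ)
    (hS : S.PosDef) (hT : T.PosDef) (hD : (T - S).PosSemidef)
    (μ ν : Fin m → ℝ) :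
    (1 / 2) * ((T⁻¹ * S).trace - (m : ℝ)
        + (ν - μ) ⬝ᵥ (T⁻¹ *ᵥ (ν - μ))
        + Real.log (T.det / S.det))
      ≤ (1 / 2) * (op2 S⁻¹ * enorm2 (ν - μ) ^ 2 + op2 S⁻¹ * (T - S).trace) := by
  rw [op2_eq_l2_opNorm]
  have hinv : T⁻¹ ≤ S⁻¹ := hS.inv_le_inv_of_le hT (le_iff.mpr hD)
  have htrace : (T⁻¹ * S).trace ≤ m := by
    have := trace_mul_le_trace_mul_of_le hinv hS.posSemidef
    rwa [nonsing_inv_mul _ ((isUnit_iff_isUnit_det S).mp hS.isUnit), trace_one,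
      Fintype.card_fin] at this
  have hquad : (ν - μ) ⬝ᵥ T⁻¹ *ᵥ (ν - μ) ≤ ‖S⁻¹‖ * enorm2 (ν - μ) ^ 2 := by
    rw [enorm2_sq]
    exact (dotProduct_mulVec_le_of_le hinv _).trans (dotProduct_mulVec_le_l2_opNorm_mul _ _)
  have hlogdet : Real.log (T.det / S.det) ≤ ‖S⁻¹‖ * (T - S).trace :=
    calc Real.log (T.det / S.det) ≤ (S⁻¹ * (T - S)).trace := hS.log_det_div_det_le hT
      _ ≤ (‖S⁻¹‖ • 1 * (T - S)).trace :=
          trace_mul_le_trace_mul_of_le hS.inv.isHermitian.le_l2_opNorm_smul_one hD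
      _ = ‖S⁻¹‖ * (T - S).trace := by rw [smul_one_mul, trace_smul, smul_eq_mul]
  linarith
end
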